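/- Let λ_* ∈ I be the unique minimizer of G. Then λ_* < σ if and only if one of the following holds: σ = ∞; or σ < ∞ and A(σ) = ∞; or σ < ∞, A(σ) < ∞ and T(σ) < m (including the case T(σ) = −∞); and in this case G'(λ_*) = 0. Correspondingly, λ_* = σ if and only if σ < ∞, A(σ) < ∞ and T(σ) is finite with m ≤ T(σ); and in this case lim_{λ→σ−} G'(λ) = (m − T(σ))/σ² ≤ 0. -/

import Mathlib

/-!
Inside the abscissa, `G'(λ) = (m - T(λ)) / λ²`, and `T` is nonincreasing because
`(1 - λ s) e^{λ s}` is nonincreasing in `λ ≥ 0` for every `s`. A minimizer below `σ` is a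
critical point. If the minimizer is `σ` itself, then `T ≥ m` on `(0, σ)` (otherwise `G` would
increase up to `σ`); Fatou's lemma applied to the nonnegative increments of the integrand of `T`
then makes that integrand integrable at `σ`, and `T(σ) = lim_{λ → σ⁻} T(λ) ≥ m`. Conversely,
`m ≤ T(σ)` makes `G` nonincreasing on `(0, σ]`, so `σ` is the minimizer by uniqueness.
-/

open MeasureTheory Real Set Filter

noncomputable section

/-- The set of positive exponents at which the bilateral Laplace transform of `f`
converges absolutely. -/
def lapSet (f : ℝ → ℝ) : Set ℝ :=
  {l : ℝ | 0 < l ∧ Integrable (fun s => f s * Real.exp (l * s))}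

/-- The abscissa of convergence of the bilateral Laplace transform of `f`,
as an extended real number. -/
def lapAbsc (f : ℝ → ℝ) : EReal :=
  sSup ((fun l : ℝ => (l : EReal)) '' lapSet f)

/-- `G(λ) = (κ⁺ A(λ) - m)/λ` where `A(λ) = ∫ a(s) e^{λ s} ds`. -/
def Gfun (κp m : ℝ) (a : ℝ → ℝ) (l : ℝ) : ℝ :=
  (κp * (∫ s, a s * Real.exp (l * s)) - m) / l

/-- `T(λ) = κ⁺ ∫ (1 - λ s) a(s) e^{λ s} ds`. -/
def Tfun (κp : ℝ) (a : ℝ → ℝ) (l : ℝ) : ℝ :=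
  κp * ∫ s, (1 - l * s) * a s * Real.exp (l * s)

/-- Class `V`: `σ(a) = ∞`, or `σ(a) < ∞` with `A(σ) = ∞`, or `σ(a) < ∞`, `A(σ) < ∞`
and `T(σ) < m` (including `T(σ) = -∞`, i.e. non-convergence). -/
def VClass (κp m : ℝ) (a : ℝ → ℝ) : Prop :=
  lapAbsc a = ⊤ ∨
  (lapAbsc a < ⊤ ∧
    ¬ Integrable (fun s => a s * Real.exp ((lapAbsc a).toReal * s))) ∨
  (lapAbsc a < ⊤ ∧
    Integrable (fun s => a s * Real.exp ((lapAbsc a).toReal * s)) ∧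
    (¬ Integrable
        (fun s => (1 - (lapAbsc a).toReal * s) * a s * Real.exp ((lapAbsc a).toReal * s)) ∨
      Tfun κp a (lapAbsc a).toReal < m))

/-- Class `W`: `σ(a) < ∞`, `A(σ) < ∞`, `T(σ)` converges to a finite value and
`m ≤ T(σ)`. -/
def WClass (κp m : ℝ) (a : ℝ → ℝ) : Prop :=
  lapAbsc a < ⊤ ∧
  Integrable (fun s => a s * Real.exp ((lapAbsc a).toReal * s)) ∧
  Integrable
    (fun s => (1 - (lapAbsc a).toReal * s) * a s * Real.exp ((lapAbsc a).toReal * s)) ∧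
  m ≤ Tfun κp a (lapAbsc a).toReal


open Topology

variable {a : ℝ → ℝ}

section LaplaceTransform

lemma exp_mul_le_exp_mul_add_exp_mul {l₁ l l₂ : ℝ} (h₁ : l₁ ≤ l) (h₂ : l ≤ l₂) (s : ℝ) :
    rexp (l * s) ≤ rexp (l₁ * s) + rexp (l₂ * s) := by
  rcases le_total s 0 with hs | hs
  · linarith [exp_le_exp.2 (mul_le_mul_of_nonpos_right h₁ hs), exp_pos (l₂ * s)]
  · linarith [exp_le_exp.2 (mul_le_mul_of_nonneg_right h₂ hs), exp_pos (l₁ * s)]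

lemma abs_mul_exp_mul_le (hnn : ∀ s, 0 ≤ a s) {l₁ l l₂ : ℝ} (h₁ : l₁ ≤ l) (h₂ : l ≤ l₂)
    (s : ℝ) :
    |a s * rexp (l * s)| ≤ |a s * rexp (l₁ * s)| + |a s * rexp (l₂ * s)| := by
  have h := mul_le_mul_of_nonneg_left (exp_mul_le_exp_mul_add_exp_mul h₁ h₂ s) (hnn s)
  simp only [abs_mul, abs_of_nonneg (hnn s), abs_exp]
  linarith

lemma integrable_mul_exp_of_mem_Icc (ha : AEStronglyMeasurable a) (hnn : ∀ s, 0 ≤ a s)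
    {l₁ l l₂ : ℝ} (hl : l ∈ Icc l₁ l₂) (h₁ : Integrable (fun s => a s * rexp (l₁ * s)))
    (h₂ : Integrable (fun s => a s * rexp (l₂ * s))) :
    Integrable (fun s => a s * rexp (l * s)) :=
  (h₁.abs.add h₂.abs).mono' (by fun_prop)
    (ae_of_all _ (abs_mul_exp_mul_le hnn hl.1 hl.2))

lemma mem_lapSet_of_le (ha : Integrable a) (hnn : ∀ s, 0 ≤ a s) {l c : ℝ}
    (hc : c ∈ lapSet a) (hl : 0 < l) (hlc : l ≤ c) : l ∈ lapSet a :=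
  ⟨hl, integrable_mul_exp_of_mem_Icc ha.1 hnn ⟨hl.le, hlc⟩ (by simpa using ha) hc.2⟩

lemma abs_mul_exp_mul_le_exp_div_add_inv {l c : ℝ} (hl : 0 < l) (hlc : l < c) (s : ℝ) :
    |s| * rexp (l * s) ≤ rexp (c * s) / (c - l) + 1 / l := by
  rcases le_total 0 s with hs | hs
  · have h : (c - l) * s * rexp (l * s) ≤ rexp (c * s) :=
      calc (c - l) * s * rexp (l * s) ≤ rexp ((c - l) * s) * rexp (l * s) := by
            gcongr; linarith [add_one_le_exp ((c - l) * s)]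
        _ = rexp (c * s) := by rw [← exp_add]; ring_nf
    have h' : s * rexp (l * s) ≤ rexp (c * s) / (c - l) := by
      rw [le_div_iff₀ (sub_pos.2 hlc)]; linarith
    rw [abs_of_nonneg hs]
    linarith [one_div_pos.2 hl]
  · have h : l * -s * rexp (l * s) ≤ 1 :=
      calc l * -s * rexp (l * s) ≤ rexp (l * -s) * rexp (l * s) := by
            gcongr; linarith [add_one_le_exp (l * -s)]
        _ = 1 := by rw [← exp_add]; ring_nf; exact exp_zero
    have h' : -s * rexp (l * s) ≤ 1 / l := by
      rw [le_div_iff₀ hl]; linarith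
    rw [abs_of_nonpos hs]
    linarith [div_nonneg (exp_pos (c * s)).le (sub_pos.2 hlc).le]

lemma integrable_mul_mul_exp (ha : Integrable a) (hnn : ∀ s, 0 ≤ a s) {l c : ℝ}
    (hl : 0 < l) (hlc : l < c) (hc : c ∈ lapSet a) :
    Integrable (fun s => s * a s * rexp (l * s)) := by
  have hmeas := ha.1
  refine ((hc.2.const_mul (1 / (c - l))).add (ha.const_mul (1 / l))).mono' (by fun_prop)
    (ae_of_all _ fun s => ?_)
  have h := mul_le_mul_of_nonneg_left (abs_mul_exp_mul_le_exp_div_add_inv hl hlc s) (hnn s)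
  rw [Real.norm_eq_abs, abs_mul, abs_mul, abs_of_nonneg (hnn s), abs_exp]
  calc |s| * a s * rexp (l * s) = a s * (|s| * rexp (l * s)) := by ring
    _ ≤ a s * (rexp (c * s) / (c - l) + 1 / l) := h
    _ = _ := by simp only [Pi.add_apply]; ring

lemma integrable_one_sub_mul_mul_exp (ha : Integrable a) (hnn : ∀ s, 0 ≤ a s) {l c : ℝ}
    (hl : 0 < l) (hlc : l < c) (hc : c ∈ lapSet a) :
    Integrable (fun s => (1 - l * s) * a s * rexp (l * s)) :=
  ((mem_lapSet_of_le ha hnn hc hl hlc.le).2.sub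
    ((integrable_mul_mul_exp ha hnn hl hlc hc).const_mul l)).congr
    (ae_of_all _ fun s => by simp only [Pi.sub_apply]; ring)

lemma hasDerivAt_integral_mul_exp (ha : Integrable a) (hnn : ∀ s, 0 ≤ a s) {l c : ℝ}
    (hl : 0 < l) (hlc : l < c) (hc : c ∈ lapSet a) :
    HasDerivAt (fun x => ∫ s, a s * rexp (x * s)) (∫ s, s * a s * rexp (l * s)) l := by
  have hmeas := ha.1
  have hl₁ : l / 2 < l := half_lt_self hl
  have hl₂ : l < (l + c) / 2 := by linarith
  refine (hasDerivAt_integral_of_dominated_loc_of_deriv_le (Ioo_mem_nhds hl₁ hl₂)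
    (F' := fun x s => s * a s * rexp (x * s))
    (bound := fun s => |s| * (|a s * rexp (l / 2 * s)| + |a s * rexp ((l + c) / 2 * s)|))
    (Eventually.of_forall fun x => by fun_prop) (mem_lapSet_of_le ha hnn hc hl hlc.le).2
    (by fun_prop) (ae_of_all _ fun s x hx => ?_) ?_ (ae_of_all _ fun s x _ => ?_)).2
  · rw [Real.norm_eq_abs, mul_assoc, abs_mul]
    exact mul_le_mul_of_nonneg_left (abs_mul_exp_mul_le hnn hx.1.le hx.2.le s) (abs_nonneg s)
  · have h₁ := (integrable_mul_mul_exp ha hnn (half_pos hl) (by linarith) hc).abs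
    have h₂ := (integrable_mul_mul_exp ha hnn (by linarith) (by linarith : (l + c) / 2 < c) hc).abs
    exact (h₁.add h₂).congr (ae_of_all _ fun s => by simp only [Pi.add_apply, abs_mul]; ring)
  · exact ((hasDerivAt_mul_const s).exp.const_mul (a s)).congr_deriv (by ring)

end LaplaceTransform

lemma continuousOn_integral_of_abs_le_add {α : Type*} [MeasurableSpace α] {μ : Measure α}
    {F : ℝ → α → ℝ} {l₁ l₂ : ℝ} (hF_meas : ∀ l ∈ Icc l₁ l₂, AEStronglyMeasurable (F l) μ)
    (hF_le : ∀ l ∈ Icc l₁ l₂, ∀ x, |F l x| ≤ |F l₁ x| + |F l₂ x|)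
    (h₁ : Integrable (F l₁) μ) (h₂ : Integrable (F l₂) μ) (hF_cont : ∀ x, Continuous (F · x)) :
    ContinuousOn (fun l => ∫ x, F l x ∂μ) (Icc l₁ l₂) :=
  continuousOn_of_dominated hF_meas (fun l hl => ae_of_all _ (hF_le l hl)) (h₁.abs.add h₂.abs)
    (ae_of_all _ fun x => (hF_cont x).continuousOn)

section TFunctional

lemma hasDerivAt_one_sub_mul_mul_exp (s l : ℝ) :
    HasDerivAt (fun l => (1 - l * s) * rexp (l * s)) (-(l * s ^ 2 * rexp (l * s))) l :=
  (((hasDerivAt_mul_const s).const_sub 1).mul (hasDerivAt_mul_const s).exp).congr_deriv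
    (by ring)

lemma antitoneOn_one_sub_mul_mul_exp (s : ℝ) :
    AntitoneOn (fun l => (1 - l * s) * rexp (l * s)) (Ici 0) := by
  refine antitoneOn_of_deriv_nonpos (convex_Ici 0) (by fun_prop)
    (fun l _ => (hasDerivAt_one_sub_mul_mul_exp s l).differentiableAt.differentiableWithinAt)
    (fun l hl => ?_)
  rw [interior_Ici] at hl
  rw [(hasDerivAt_one_sub_mul_mul_exp s l).deriv, neg_nonpos]
  exact mul_nonneg (mul_nonneg (le_of_lt hl) (sq_nonneg s)) (exp_pos _).le

lemma one_sub_mul_mul_mul_exp_le (hnn : ∀ s, 0 ≤ a s) {l l' : ℝ} (hl : 0 ≤ l) (hll' : l ≤ l')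
    (s : ℝ) : (1 - l' * s) * a s * rexp (l' * s) ≤ (1 - l * s) * a s * rexp (l * s) := by
  have h := mul_le_mul_of_nonneg_left
    (antitoneOn_one_sub_mul_mul_exp s hl (hl.trans hll') hll') (hnn s)
  calc (1 - l' * s) * a s * rexp (l' * s) = a s * ((1 - l' * s) * rexp (l' * s)) := by ring
    _ ≤ a s * ((1 - l * s) * rexp (l * s)) := h
    _ = (1 - l * s) * a s * rexp (l * s) := by ring

lemma abs_one_sub_mul_mul_mul_exp_le (hnn : ∀ s, 0 ≤ a s) {l₁ l l₂ : ℝ} (h₀ : 0 ≤ l₁)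
    (h₁ : l₁ ≤ l) (h₂ : l ≤ l₂) (s : ℝ) :
    |(1 - l * s) * a s * rexp (l * s)| ≤
      |(1 - l₁ * s) * a s * rexp (l₁ * s)| + |(1 - l₂ * s) * a s * rexp (l₂ * s)| := by
  rw [add_comm]
  exact (abs_le_max_abs_abs (one_sub_mul_mul_mul_exp_le hnn (h₀.trans h₁) h₂ s)
    (one_sub_mul_mul_mul_exp_le hnn h₀ h₁ s)).trans
    (max_le_add_of_nonneg (abs_nonneg _) (abs_nonneg _))

lemma Tfun_le_Tfun {κp : ℝ} (hκ : 0 ≤ κp) (hnn : ∀ s, 0 ≤ a s) {l l' : ℝ} (hl : 0 ≤ l)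
    (hll' : l ≤ l') (hint : Integrable (fun s => (1 - l * s) * a s * rexp (l * s)))
    (hint' : Integrable (fun s => (1 - l' * s) * a s * rexp (l' * s))) :
    Tfun κp a l' ≤ Tfun κp a l :=
  mul_le_mul_of_nonneg_left (integral_mono hint' hint (one_sub_mul_mul_mul_exp_le hnn hl hll')) hκ

lemma tendsto_Tfun_nhdsLT (κp : ℝ) (ha : Integrable a) (hnn : ∀ s, 0 ≤ a s) {σ : ℝ}
    (hσ : σ ∈ lapSet a) (hT : Integrable (fun s => (1 - σ * s) * a s * rexp (σ * s))) :
    Tendsto (Tfun κp a) (𝓝[<] σ) (𝓝 (Tfun κp a σ)) := by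
  have hmeas := ha.1
  have hσ₁ : σ / 2 < σ := half_lt_self hσ.1
  have hcont : ContinuousOn (fun l => ∫ s, (1 - l * s) * a s * rexp (l * s)) (Icc (σ / 2) σ) :=
    continuousOn_integral_of_abs_le_add (fun _ _ => by fun_prop)
      (fun _ hl => abs_one_sub_mul_mul_mul_exp_le hnn (half_pos hσ.1).le hl.1 hl.2)
      (integrable_one_sub_mul_mul_exp ha hnn (half_pos hσ.1) hσ₁ hσ) hT (fun s => by fun_prop)
  exact ((hcont σ (right_mem_Icc.2 hσ₁.le)).mono_of_mem_nhdsWithin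
    (Icc_mem_nhdsLT hσ₁)).const_mul κp

lemma integrable_one_sub_mul_mul_exp_of_le_integral (ha : Integrable a) (hnn : ∀ s, 0 ≤ a s)
    {σ K : ℝ} (hσ : σ ∈ lapSet a)
    (hK : ∀ l ∈ Ioo 0 σ, K ≤ ∫ s, (1 - l * s) * a s * rexp (l * s)) :
    Integrable (fun s => (1 - σ * s) * a s * rexp (σ * s)) := by
  have hσ₀ : 0 < σ / 2 := half_pos hσ.1
  obtain ⟨u, -, hu, hu_lim⟩ := exists_seq_strictMono_tendsto' (half_lt_self hσ.1)
  have hu₀ : ∀ n, 0 < u n := fun n => hσ₀.trans (hu n).1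
  have hFu : ∀ n, Integrable (fun s => (1 - u n * s) * a s * rexp (u n * s)) := fun n =>
    integrable_one_sub_mul_mul_exp ha hnn (hu₀ n) (hu n).2 hσ
  have hF₀ : Integrable (fun s => (1 - σ / 2 * s) * a s * rexp (σ / 2 * s)) :=
    integrable_one_sub_mul_mul_exp ha hnn hσ₀ (half_lt_self hσ.1) hσ
  -- Fatou: the integrals of these nonnegative differences stay below `∫ (…at σ / 2) - K`
  have hdiff : Integrable (fun s =>
      (1 - σ / 2 * s) * a s * rexp (σ / 2 * s) - (1 - σ * s) * a s * rexp (σ * s)) := by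
    refine integrable_of_tendsto
      (G := fun n s => (1 - σ / 2 * s) * a s * rexp (σ / 2 * s) -
        (1 - u n * s) * a s * rexp (u n * s))
      (ae_of_all _ fun s => tendsto_const_nhds.sub
        (((by fun_prop : Continuous fun l => (1 - l * s) * a s * rexp (l * s)).tendsto σ).comp
          hu_lim))
      (fun n => (hF₀.sub (hFu n)).1)
      (ne_top_of_le_ne_top (b := ENNReal.ofReal ((∫ s, (1 - σ / 2 * s) * a s *
        rexp (σ / 2 * s)) - K)) ENNReal.ofReal_ne_top
        (liminf_le_of_frequently_le' (Frequently.of_forall fun n => ?_)))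
    have hnonneg : 0 ≤ fun s => (1 - σ / 2 * s) * a s * rexp (σ / 2 * s) -
        (1 - u n * s) * a s * rexp (u n * s) := fun s =>
      sub_nonneg.2 (one_sub_mul_mul_mul_exp_le hnn hσ₀.le (hu n).1.le s)
    have hint : Integrable (fun s => (1 - σ / 2 * s) * a s * rexp (σ / 2 * s) -
        (1 - u n * s) * a s * rexp (u n * s)) := hF₀.sub (hFu n)
    rw [lintegral_enorm_of_nonneg hnonneg,
      ← ofReal_integral_eq_lintegral_ofReal hint (ae_of_all _ hnonneg),
      integral_sub hF₀ (hFu n)]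
    exact ENNReal.ofReal_le_ofReal (by linarith [hK (u n) ⟨hu₀ n, (hu n).2⟩])
  exact (hF₀.sub hdiff).congr (ae_of_all _ fun s => by simp)

end TFunctional

section GFunction

variable {κp m : ℝ}

lemma hasDerivAt_Gfun (ha : Integrable a) (hnn : ∀ s, 0 ≤ a s) {l c : ℝ} (hl : 0 < l)
    (hlc : l < c) (hc : c ∈ lapSet a) :
    HasDerivAt (Gfun κp m a) ((m - Tfun κp a l) / l ^ 2) l := by
  have hT : Tfun κp a l =
      κp * ((∫ s, a s * rexp (l * s)) - l * ∫ s, s * a s * rexp (l * s)) := by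
    unfold Tfun
    congr 1
    rw [← integral_const_mul, ← integral_sub (mem_lapSet_of_le ha hnn hc hl hlc.le).2
      ((integrable_mul_mul_exp ha hnn hl hlc hc).const_mul l)]
    congr 1; ext s; ring
  refine ((((hasDerivAt_integral_mul_exp ha hnn hl hlc hc).const_mul κp).sub_const m).div
    (hasDerivAt_id l) hl.ne').congr_deriv ?_
  rw [hT, id]; ring

lemma continuousOn_Gfun (ha : AEStronglyMeasurable a) (hnn : ∀ s, 0 ≤ a s) {l₁ l₂ : ℝ}
    (h₁ : l₁ ∈ lapSet a) (h₂ : l₂ ∈ lapSet a) : ContinuousOn (Gfun κp m a) (Icc l₁ l₂) := by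
  have hA : ContinuousOn (fun l => ∫ s, a s * rexp (l * s)) (Icc l₁ l₂) :=
    continuousOn_integral_of_abs_le_add (fun _ _ => by fun_prop)
      (fun _ hl => abs_mul_exp_mul_le hnn hl.1 hl.2) h₁.2 h₂.2 (fun s => by fun_prop)
  exact ((hA.const_smul κp).sub continuousOn_const).div continuousOn_id
    fun l hl => (h₁.1.trans_le hl.1).ne'

lemma antitoneOn_Gfun (ha : Integrable a) (hnn : ∀ s, 0 ≤ a s) {l σ : ℝ} (hl : l ∈ lapSet a)
    (hσ : σ ∈ lapSet a) (hmT : ∀ x ∈ Ioo l σ, m ≤ Tfun κp a x) :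
    AntitoneOn (Gfun κp m a) (Icc l σ) := by
  have hG : ∀ x ∈ Ioo l σ, HasDerivAt (Gfun κp m a) ((m - Tfun κp a x) / x ^ 2) x :=
    fun x hx => hasDerivAt_Gfun ha hnn (hl.1.trans hx.1) hx.2 hσ
  refine antitoneOn_of_deriv_nonpos (convex_Icc l σ) (continuousOn_Gfun ha.1 hnn hl hσ)
    (fun x hx => ?_) (fun x hx => ?_) <;> rw [interior_Icc] at hx
  · exact (hG x hx).differentiableAt.differentiableWithinAt
  · rw [(hG x hx).deriv]
    exact div_nonpos_of_nonpos_of_nonneg (sub_nonpos.2 (hmT x hx)) (sq_nonneg x)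

lemma strictMonoOn_Gfun (ha : Integrable a) (hnn : ∀ s, 0 ≤ a s) {l σ : ℝ} (hl : l ∈ lapSet a)
    (hσ : σ ∈ lapSet a) (hmT : ∀ x ∈ Ioo l σ, Tfun κp a x < m) :
    StrictMonoOn (Gfun κp m a) (Icc l σ) := by
  refine strictMonoOn_of_deriv_pos (convex_Icc l σ) (continuousOn_Gfun ha.1 hnn hl hσ) ?_
  rw [interior_Icc]
  intro x hx
  have hx₀ : 0 < x := hl.1.trans hx.1
  rw [(hasDerivAt_Gfun ha hnn hx₀ hx.2 hσ).deriv]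
  exact div_pos (sub_pos.2 (hmT x hx)) (pow_pos hx₀ 2)

lemma Gfun_le_of_le_Tfun (hκ : 0 ≤ κp) (ha : Integrable a) (hnn : ∀ s, 0 ≤ a s) {l σ : ℝ}
    (hl : l ∈ lapSet a) (hσ : σ ∈ lapSet a) (hlσ : l ≤ σ)
    (hT : Integrable (fun s => (1 - σ * s) * a s * rexp (σ * s))) (hmT : m ≤ Tfun κp a σ) :
    Gfun κp m a σ ≤ Gfun κp m a l :=
  antitoneOn_Gfun ha hnn hl hσ (fun _ hx => hmT.trans (Tfun_le_Tfun hκ hnn (hl.1.trans hx.1).le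
      hx.2.le (integrable_one_sub_mul_mul_exp ha hnn (hl.1.trans hx.1) hx.2 hσ) hT))
    (left_mem_Icc.2 hlσ) (right_mem_Icc.2 hlσ) hlσ

lemma le_Tfun_of_forall_Gfun_le (hκ : 0 ≤ κp) (ha : Integrable a) (hnn : ∀ s, 0 ≤ a s)
    {σ : ℝ} (hσ : σ ∈ lapSet a) (hmin : ∀ l ∈ lapSet a, Gfun κp m a σ ≤ Gfun κp m a l)
    {l : ℝ} (hl : l ∈ Ioo 0 σ) : m ≤ Tfun κp a l := by
  by_contra! hTl
  have hl' : l ∈ lapSet a := mem_lapSet_of_le ha hnn hσ hl.1 hl.2.le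
  have hmono := strictMonoOn_Gfun ha hnn hl' hσ fun x hx =>
    (Tfun_le_Tfun hκ hnn hl.1.le hx.1.le (integrable_one_sub_mul_mul_exp ha hnn hl.1 hl.2 hσ)
      (integrable_one_sub_mul_mul_exp ha hnn (hl.1.trans hx.1) hx.2 hσ)).trans_lt hTl
  exact (hmono (left_mem_Icc.2 hl.2.le) (right_mem_Icc.2 hl.2.le) hl.2).not_ge (hmin l hl')

lemma tendsto_deriv_Gfun_nhdsLT (ha : Integrable a) (hnn : ∀ s, 0 ≤ a s) {σ : ℝ}
    (hσ : σ ∈ lapSet a) (hT : Integrable (fun s => (1 - σ * s) * a s * rexp (σ * s))) :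
    Tendsto (deriv (Gfun κp m a)) (𝓝[<] σ) (𝓝 ((m - Tfun κp a σ) / σ ^ 2)) := by
  refine ((tendsto_const_nhds.sub (tendsto_Tfun_nhdsLT κp ha hnn hσ hT)).div
    ((continuous_pow 2).tendsto σ |>.mono_left nhdsWithin_le_nhds) (pow_pos hσ.1 2).ne').congr' ?_
  filter_upwards [Ioo_mem_nhdsLT hσ.1] with l hl
  exact (hasDerivAt_Gfun ha hnn hl.1 hl.2 hσ).deriv.symm

lemma deriv_Gfun_eq_zero_of_forall_Gfun_le (ha : Integrable a) (hnn : ∀ s, 0 ≤ a s)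
    {l c : ℝ} (hl : l ∈ lapSet a) (hc : c ∈ lapSet a) (hlc : l < c)
    (hmin : ∀ l' ∈ lapSet a, Gfun κp m a l ≤ Gfun κp m a l') : deriv (Gfun κp m a) l = 0 :=
  IsLocalMin.deriv_eq_zero <| Filter.mem_of_superset (Ioo_mem_nhds hl.1 hlc) fun x hx =>
    hmin x (mem_lapSet_of_le ha hnn hc hx.1 hx.2.le)

end GFunction

section Abscissa

lemma coe_le_lapAbsc {l : ℝ} (hl : l ∈ lapSet a) : (l : EReal) ≤ lapAbsc a :=
  le_sSup (mem_image_of_mem _ hl)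

lemma exists_mem_lapSet_gt_of_coe_lt_lapAbsc {l : ℝ} (h : (l : EReal) < lapAbsc a) :
    ∃ c ∈ lapSet a, l < c := by
  obtain ⟨_, ⟨c, hc, rfl⟩, hlc⟩ := lt_sSup_iff.1 h
  exact ⟨c, hc, EReal.coe_lt_coe_iff.1 hlc⟩

lemma coe_toReal_lapAbsc (hne : (lapSet a).Nonempty) (hfin : lapAbsc a < ⊤) :
    ((lapAbsc a).toReal : EReal) = lapAbsc a :=
  EReal.coe_toReal hfin.ne (ne_bot_of_le_ne_bot (EReal.coe_ne_bot _) (coe_le_lapAbsc hne.some_mem))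

lemma le_toReal_lapAbsc (hfin : lapAbsc a < ⊤) {l : ℝ} (hl : l ∈ lapSet a) :
    l ≤ (lapAbsc a).toReal := by
  have h := coe_le_lapAbsc hl
  rwa [← coe_toReal_lapAbsc ⟨l, hl⟩ hfin, EReal.coe_le_coe_iff] at h

end Abscissa

section Classes

variable {κp m : ℝ}

lemma VClass_iff_not_WClass : VClass κp m a ↔ ¬ WClass κp m a := by
  rw [VClass, WClass, lt_top_iff_ne_top, ← not_le (a := m)]
  tauto

lemma WClass.toReal_lapAbsc_mem_lapSet (hW : WClass κp m a) (hne : (lapSet a).Nonempty) :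
    (lapAbsc a).toReal ∈ lapSet a :=
  let ⟨_, hl⟩ := hne
  ⟨hl.1.trans_le (le_toReal_lapAbsc hW.1 hl), hW.2.1⟩

lemma WClass.forall_Gfun_le (hW : WClass κp m a) (hκ : 0 ≤ κp) (ha : Integrable a)
    (hnn : ∀ s, 0 ≤ a s) : ∀ l ∈ lapSet a, Gfun κp m a (lapAbsc a).toReal ≤ Gfun κp m a l :=
  fun l hl => Gfun_le_of_le_Tfun hκ ha hnn hl (hW.toReal_lapAbsc_mem_lapSet ⟨l, hl⟩)
    (le_toReal_lapAbsc hW.1 hl) hW.2.2.1 hW.2.2.2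

lemma WClass_of_coe_eq_lapAbsc (hκ : 0 < κp) (ha : Integrable a) (hnn : ∀ s, 0 ≤ a s) {σ : ℝ}
    (hσ : σ ∈ lapSet a) (hσa : (σ : EReal) = lapAbsc a)
    (hmin : ∀ l ∈ lapSet a, Gfun κp m a σ ≤ Gfun κp m a l) : WClass κp m a := by
  have hmT : ∀ l ∈ Ioo 0 σ, m ≤ Tfun κp a l := fun l hl =>
    le_Tfun_of_forall_Gfun_le hκ.le ha hnn hσ hmin hl
  have hT : Integrable (fun s => (1 - σ * s) * a s * rexp (σ * s)) :=
    integrable_one_sub_mul_mul_exp_of_le_integral ha hnn hσ (K := m / κp) fun l hl =>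
      (div_le_iff₀' hκ).2 (hmT l hl)
  rw [WClass, ← hσa, EReal.toReal_coe]
  refine ⟨EReal.coe_lt_top σ, hσ.2, hT, ge_of_tendsto (tendsto_Tfun_nhdsLT κp ha hnn hσ hT) ?_⟩
  filter_upwards [Ioo_mem_nhdsLT hσ.1] with l hl using hmT l hl

end Classes

theorem minimizer_vs_abscissa_general
    (κp m : ℝ) (hm : 0 < m) (hκ : m < κp)
    (a : ℝ → ℝ) (ha_int : Integrable a) (ha_nonneg : ∀ s, 0 ≤ a s)
    (lstar : ℝ) (hl_mem : lstar ∈ lapSet a)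
    (hl_min : ∀ l ∈ lapSet a, Gfun κp m a lstar ≤ Gfun κp m a l)
    (hl_uniq : ∀ l ∈ lapSet a,
      (∀ l' ∈ lapSet a, Gfun κp m a l ≤ Gfun κp m a l') → l = lstar) :
    ((lstar : EReal) < lapAbsc a ↔ VClass κp m a) ∧
    ((lstar : EReal) < lapAbsc a → deriv (Gfun κp m a) lstar = 0) ∧
    ((lstar : EReal) = lapAbsc a ↔ WClass κp m a) ∧
    (WClass κp m a →
      Tendsto (deriv (Gfun κp m a))
        (nhdsWithin (lapAbsc a).toReal (Set.Iio (lapAbsc a).toReal))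
        (nhds ((m - Tfun κp a (lapAbsc a).toReal) / ((lapAbsc a).toReal) ^ 2)) ∧
      (m - Tfun κp a (lapAbsc a).toReal) / ((lapAbsc a).toReal) ^ 2 ≤ 0) := by
  have hκ₀ : 0 < κp := hm.trans hκ
  have hne : (lapSet a).Nonempty := ⟨lstar, hl_mem⟩
  have hle : (lstar : EReal) ≤ lapAbsc a := coe_le_lapAbsc hl_mem
  have hW : WClass κp m a ↔ (lstar : EReal) = lapAbsc a := by
    refine ⟨fun hW => ?_, fun h => WClass_of_coe_eq_lapAbsc hκ₀ ha_int ha_nonneg hl_mem h hl_min⟩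
    rw [← hl_uniq _ (hW.toReal_lapAbsc_mem_lapSet hne)
      (hW.forall_Gfun_le hκ₀.le ha_int ha_nonneg), coe_toReal_lapAbsc hne hW.1]
  refine ⟨by rw [VClass_iff_not_WClass, hW, hle.lt_iff_ne], fun hlt => ?_, hW.symm,
    fun hW' => ⟨?_, div_nonpos_of_nonpos_of_nonneg (sub_nonpos.2 hW'.2.2.2) (sq_nonneg _)⟩⟩
  · obtain ⟨c, hc, hlc⟩ := exists_mem_lapSet_gt_of_coe_lt_lapAbsc hlt
    exact deriv_Gfun_eq_zero_of_forall_Gfun_le ha_int ha_nonneg hl_mem hc hlc hl_min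
  · exact tendsto_deriv_Gfun_nhdsLT ha_int ha_nonneg (hW'.toReal_lapAbsc_mem_lapSet hne) hW'.2.2.1

/-- the unique minimizer `λ_*` of `G` satisfies `λ_* < σ(a)` iff `a` is of
class `V` (in which case `G'(λ_*) = 0`), and `λ_* = σ(a)` iff `a` is of class `W`
(in which case `G'(λ) → (m - T(σ))/σ² ≤ 0` as `λ → σ−`). -/
theorem minimizer_vs_abscissa
    (κp m : ℝ) (hm : 0 < m) (hκ : m < κp)
    (a : ℝ → ℝ) (ha_int : Integrable a) (ha_nonneg : ∀ s, 0 ≤ a s)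
    (ha_one : (∫ s, a s) = 1) (ha_bdd : ∃ C, ∀ s, a s ≤ C)
    (ha_mom : Integrable (fun s => s * a s))
    (ha_absc : (lapSet a).Nonempty)
    (ha_nondeg : ∃ r ≥ (0:ℝ), ∃ ρ₀ > (0:ℝ), ∃ δ₀ > (0:ℝ),
      ∀ᵐ s ∂(volume : Measure ℝ), s ∈ Set.Icc (r - δ₀) (r + δ₀) → ρ₀ ≤ a s)
    (lstar : ℝ) (hl_mem : lstar ∈ lapSet a)
    (hl_min : ∀ l ∈ lapSet a, Gfun κp m a lstar ≤ Gfun κp m a l)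
    (hl_uniq : ∀ l ∈ lapSet a,
      (∀ l' ∈ lapSet a, Gfun κp m a l ≤ Gfun κp m a l') → l = lstar) :
    ((lstar : EReal) < lapAbsc a ↔ VClass κp m a) ∧
    ((lstar : EReal) < lapAbsc a → deriv (Gfun κp m a) lstar = 0) ∧
    ((lstar : EReal) = lapAbsc a ↔ WClass κp m a) ∧
    (WClass κp m a →
      Tendsto (deriv (Gfun κp m a))
        (nhdsWithin (lapAbsc a).toReal (Set.Iio (lapAbsc a).toReal))
        (nhds ((m - Tfun κp a (lapAbsc a).toReal) / ((lapAbsc a).toReal) ^ 2)) ∧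
      (m - Tfun κp a (lapAbsc a).toReal) / ((lapAbsc a).toReal) ^ 2 ≤ 0) :=
  minimizer_vs_abscissa_general κp m hm hκ a ha_int ha_nonneg lstar hl_mem hl_min hl_uniq

end
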